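/- Assume (ℵ_ω)^ω = ℵ_{ω+1} and Chang's conjecture (ℵ_{ω+1}, ℵ_ω) ↠ (ℵ_1, ℵ_0). Then for every point x of 2^{ℵ_ω}, there is no local base ℬ at x in the G_δ-modification of 2^{ℵ_ω} such that |{B' ∈ ℬ : B ⊆ B'}| ≤ ℵ_0 for every B ∈ ℬ; consequently χNt(x, (2^{ℵ_ω})_δ) ≥ ω_2. -/

import Mathlib

/-!
In the `G_δ`-topology every neighbourhood of `x` contains a cylinder `{y | y = x on s}` with
`s` countable, and such cylinders are open. So the countable supports of the members of a local
base `ℬ` form a cofinal family `F` of countable subsets of `ℵ_ω`. As `cf ℵ_ω = ω`, such a family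
has more than `ℵ_ω` members, hence exactly `ℵ_ω ^ ℵ₀ = ℵ_{ω+1}`. Chang's conjecture, applied to
`F ⊔ ℵ_ω` with unary functions enumerating the members of `F`, yields a countable `C` containing
uncountably many members of `F`. A member of `ℬ` inside the cylinder over `C` then lies below
uncountably many members of `ℬ`.
-/

/-- The `G_δ`-modification of a topological space: the topology generated by
countable intersections of open sets. -/
def deltaTop (X : Type*) [TopologicalSpace X] : TopologicalSpace X :=
  TopologicalSpace.generateFrom {s | ∃ f : ℕ → Set X, (∀ n, IsOpen (f n)) ∧ s = ⋂ n, f n}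

/-- `B` is a local base at `x` for the topology `t`. -/
def IsLocalBaseAt {X : Type*} (t : TopologicalSpace X) (x : X) (B : Set (Set X)) : Prop :=
  (∀ b ∈ B, t.IsOpen b ∧ x ∈ b) ∧ ∀ U, t.IsOpen U → x ∈ U → ∃ b ∈ B, b ⊆ U

/-- Chang's conjecture `(ℵ_{ω+1}, ℵ_ω) ↠ (ℵ_1, ℵ_0)`: every structure in a countable
language on a set of size `ℵ_{ω+1}` with a distinguished subset of size `ℵ_ω` has an
elementary substructure of size `ℵ_1` meeting the distinguished set in a set of size `ℵ_0`. -/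
def ChangsConjecture : Prop :=
  ∀ (L : FirstOrder.Language.{0, 0}) (M : Type) [inst : L.Structure M],
    L.card ≤ Cardinal.aleph0 →
    Cardinal.mk M = Cardinal.aleph (Ordinal.omega0 + 1) →
    ∀ U : Set M, Cardinal.mk U = Cardinal.aleph Ordinal.omega0 →
      ∃ S : L.ElementarySubstructure M,
        Cardinal.mk S = Cardinal.aleph 1 ∧
        Cardinal.mk (((S : FirstOrder.Language.Substructure L M) : Set M) ∩ U : Set M) =
          Cardinal.aleph0

open Set Cardinal Ordinal Topology

universe u

section DeltaTopology

variable {X : Type*} [TopologicalSpace X]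

theorem IsGδ.isOpen_deltaTop {s : Set X} (hs : IsGδ s) : IsOpen[deltaTop X] s :=
  .basic _ (isGδ_iff_eq_iInter_nat.1 hs)

theorem exists_isGδ_subset_of_isOpen_deltaTop {U : Set X} (hU : IsOpen[deltaTop X] U)
    {x : X} (hx : x ∈ U) : ∃ G, IsGδ G ∧ x ∈ G ∧ G ⊆ U := by
  induction hU with
  | basic V hV => exact ⟨V, isGδ_iff_eq_iInter_nat.2 hV, hx, subset_rfl⟩
  | univ => exact ⟨univ, .univ, hx, subset_rfl⟩
  | inter V W _ _ ihV ihW =>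
    obtain ⟨G, hG, hxG, hGV⟩ := ihV hx.1
    obtain ⟨H, hH, hxH, hHW⟩ := ihW hx.2
    exact ⟨G ∩ H, hG.inter hH, ⟨hxG, hxH⟩, inter_subset_inter hGV hHW⟩
  | sUnion S _ ih =>
    obtain ⟨V, hV, hxV⟩ := hx
    obtain ⟨G, hG, hxG, hGV⟩ := ih V hV hxV
    exact ⟨G, hG, hxG, hGV.trans (subset_sUnion_of_mem hV)⟩

end DeltaTopology

section CountableBoxes

variable {ι X : Type*}

theorem pi_singleton_subset_pi_singleton_iff [Nontrivial X] {s t : Set ι} (x : ι → X) :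
    (s.pi fun i => {x i}) ⊆ (t.pi fun i => {x i}) ↔ t ⊆ s := by
  classical
  refine ⟨fun h i hit => ?_, fun h => pi_mono' (fun _ _ => subset_rfl) h⟩
  by_contra his
  obtain ⟨a, ha⟩ := exists_ne (x i)
  have hx : ∀ u : Set ι, x ∈ u.pi fun i => {x i} := fun _ _ _ => rfl
  have hmem : Function.update x i a ∈ s.pi fun i => {x i} :=
    (update_mem_pi_iff_of_mem (hx s)).2 fun hi => absurd hi his
  exact ha ((update_mem_pi_iff_of_mem (hx t)).1 (h hmem) hit)

variable [TopologicalSpace X]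

theorem IsGδ.exists_countable_pi_singleton_subset {G : Set (ι → X)} (hG : IsGδ G)
    {x : ι → X} (hx : x ∈ G) : ∃ s : Set ι, s.Countable ∧ (s.pi fun i => {x i}) ⊆ G := by
  obtain ⟨f, hf, rfl⟩ := isGδ_iff_eq_iInter_nat.1 hG
  choose I u hu hIu using fun n => isOpen_pi_iff.1 (hf n) x (mem_iInter.1 hx n)
  refine ⟨⋃ n, (I n : Set ι), countable_iUnion fun n => (I n).countable_toSet,
    subset_iInter fun n => ?_⟩
  refine (pi_mono' (fun i hi => ?_) (subset_iUnion (fun n => (I n : Set ι)) n)).trans (hIu n)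
  exact singleton_subset_iff.2 (hu n i hi).2

theorem isGδ_pi_singleton [DiscreteTopology X] {s : Set ι} (hs : s.Countable) (x : ι → X) :
    IsGδ (s.pi fun i => {x i}) := by
  rw [pi_def]
  exact .biInter_of_isOpen hs fun i _ => (isOpen_discrete _).preimage (continuous_apply i)

theorem exists_countable_pi_singleton_subset_of_isOpen_deltaTop {U : Set (ι → X)}
    (hU : IsOpen[deltaTop (ι → X)] U) {x : ι → X} (hx : x ∈ U) :
    ∃ s : Set ι, s.Countable ∧ (s.pi fun i => {x i}) ⊆ U := by
  obtain ⟨G, hG, hxG, hGU⟩ := exists_isGδ_subset_of_isOpen_deltaTop hU hx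
  obtain ⟨s, hs, hsG⟩ := hG.exists_countable_pi_singleton_subset hxG
  exact ⟨s, hs, hsG.trans hGU⟩

end CountableBoxes

section CountableCofinality

variable {ι : Type u}

theorem exists_iUnion_eq_univ_mk_lt_of_cof_le_aleph0 (hι : ℵ₀ ≤ #ι)
    (hcof : (#ι).ord.cof ≤ ℵ₀) : ∃ s : ℕ → Set ι, (∀ n, #(s n) < #ι) ∧ ⋃ n, s n = Set.univ := by
  obtain ⟨e⟩ : Nonempty (ι ≃ (#ι).ord.ToType) := Cardinal.eq.1 (mk_ord_toType _).symm
  obtain ⟨S, hScof, hS⟩ := Order.exists_cof_eq (#ι).ord.ToType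
  have hSc : S.Countable := le_aleph0_iff_set_countable.1 (by rwa [hS, cof_toType])
  have : Nonempty (#ι).ord.ToType := (mk_ne_zero_iff.1 (aleph0_pos.trans_le hι).ne').map e
  obtain ⟨f, rfl⟩ := hSc.exists_eq_range (hScof.nonempty)
  refine ⟨fun n => e ⁻¹' Iic (f n), fun n => ?_, eq_univ_of_forall fun i => ?_⟩
  · calc #(e ⁻¹' Iic (f n)) ≤ #(Iic (f n)) := mk_preimage_of_injective _ _ e.injective
      _ ≤ #(Iio (f n)) + 1 := by rw [← Iio_insert]; exact mk_insert_le
      _ < #ι := add_lt_of_lt hι (by simpa using mk_Iio_lt (f n) (by simp))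
        (one_lt_aleph0.trans_le hι)
  · obtain ⟨_, ⟨n, rfl⟩, hn⟩ := hScof (e i)
    exact mem_iUnion.2 ⟨n, hn⟩

theorem cof_ord_aleph_omega0 : (ℵ_ ω : Cardinal.{u}).ord.cof = ℵ₀ := by
  rw [ord_aleph, cof_map_of_isNormal isNormal_omega isSuccLimit_omega0, cof_omega0]

theorem mk_le_of_forall_countable {F : Set (Set ι)} (hF : ∀ A ∈ F, A.Countable) :
    #F ≤ max #ι ℵ₀ ^ ℵ₀ :=
  (mk_le_mk_of_subset fun A hA => le_aleph0_iff_set_countable.2 (hF A hA)).trans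
    (mk_bounded_set_le ι ℵ₀)

theorem lt_mk_of_isCofinalFor_countable (hι : ℵ₀ < #ι) (hcof : (#ι).ord.cof ≤ ℵ₀)
    {F : Set (Set ι)} (hFc : ∀ A ∈ F, A.Countable) (hF : IsCofinalFor {s | s.Countable} F) :
    #ι < #F := by
  by_contra! hle
  obtain ⟨φ⟩ := hle
  obtain ⟨s, hs, hcover⟩ := exists_iUnion_eq_univ_mk_lt_of_cof_le_aleph0 hι.le hcof
  let W n := ⋃ A ∈ φ ⁻¹' s n, (A : Set ι)
  have hW : ∀ n, #(W n) < #ι := fun n => calc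
    #(W n) ≤ #(φ ⁻¹' s n) * ⨆ A : φ ⁻¹' s n, #(A : Set ι) := mk_biUnion_le _ _
    _ ≤ #(s n) * ℵ₀ := by
      gcongr
      · exact mk_preimage_of_injective _ _ φ.injective
      · exact ciSup_le' fun A => le_aleph0_iff_set_countable.2 (hFc _ A.1.2)
    _ < #ι := mul_lt_of_lt hι.le (hs n) hι
  have hWne : ∀ n, ∃ i, i ∉ W n := fun n => by
    by_contra! h
    simpa [eq_univ_of_forall h] using hW n
  choose i hi using hWne
  obtain ⟨A, hAF, hiA⟩ := hF (countable_range i)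
  obtain ⟨n, hn⟩ := mem_iUnion.1 (hcover ▸ mem_univ (φ ⟨A, hAF⟩))
  exact hi n (mem_biUnion (x := ⟨A, hAF⟩) hn (hiA (mem_range_self n)))

theorem mk_eq_aleph_omega0_add_one_of_isCofinalFor
    (hpow : (ℵ_ ω : Cardinal.{u}) ^ ℵ₀ = ℵ_ (ω + 1)) (hι : #ι = ℵ_ ω) {F : Set (Set ι)}
    (hFc : ∀ A ∈ F, A.Countable) (hF : IsCofinalFor {s | s.Countable} F) :
    #F = ℵ_ (ω + 1) := by
  refine le_antisymm ?_ ?_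
  · simpa [hι, hpow] using mk_le_of_forall_countable hFc
  · rw [← succ_aleph, Order.succ_le_iff, ← hι]
    exact lt_mk_of_isCofinalFor_countable (hι ▸ aleph0_lt_aleph.2 omega0_pos)
      (hι ▸ cof_ord_aleph_omega0.le) hFc hF

end CountableCofinality

/-- The `n`-ary symbol `(j, k)` will be read as the `k`-th of countably many unary operations
applied to the `j`-th argument. -/
abbrev unaryLanguage : FirstOrder.Language.{0, 0} :=
  ⟨fun n => Fin n × ℕ, fun _ => Empty⟩

theorem ChangsConjecture.exists_countable_not_countable_subsets (hcc : ChangsConjecture)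
    {ι : Type} (hι : #ι = ℵ_ ω) {F : Set (Set ι)} (hF : #F = ℵ_ (ω + 1))
    (hFc : ∀ A ∈ F, A.Countable) : ∃ C : Set ι, C.Countable ∧ ¬ {A ∈ F | A ⊆ C}.Countable := by
  have : Inhabited ι := Classical.inhabited_of_nonempty (mk_ne_zero_iff.1 (hι ▸ aleph_pos _).ne')
  let op : ℕ → F ⊕ ι → F ⊕ ι := fun k =>
    Sum.elim (fun A => .inr (enumerateCountable (hFc A A.2) default k)) .inr
  let _ : unaryLanguage.Structure (F ⊕ ι) := ⟨fun f v => op f.2 (v f.1), fun r _ => r.elim⟩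
  have hM : #(F ⊕ ι) = ℵ_ (ω + 1) := by
    rw [mk_sum, Cardinal.lift_id, Cardinal.lift_id, hF, hι]
    exact add_eq_left (aleph0_le_aleph _) (aleph_le_aleph.2 le_self_add)
  obtain ⟨S, hS, hSι⟩ := hcc unaryLanguage (F ⊕ ι) mk_le_aleph0 hM (range .inr)
    (by rw [mk_range_eq _ Sum.inr_injective, hι])
  set T : Set (F ⊕ ι) := ((S : unaryLanguage.Substructure (F ⊕ ι)) : Set (F ⊕ ι))
  have hsub : ∀ A : F, .inl A ∈ T → (A : Set ι) ⊆ .inr ⁻¹' T := fun A hA i hi => by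
    obtain ⟨k, rfl⟩ := subset_range_enumerate (hFc A A.2) default hi
    exact S.toSubstructure.fun_mem ((0 : Fin 1), k) ![.inl A] (Fin.forall_fin_one.2 hA)
  have hC : (Sum.inr ⁻¹' T).Countable := by
    rw [← preimage_inter_range]
    exact (le_aleph0_iff_set_countable.1 hSι.le).preimage Sum.inr_injective
  refine ⟨.inr ⁻¹' T, hC, fun hcount => ?_⟩
  have hinl : (Sum.inl ⁻¹' T).Countable :=
    (hcount.preimage Subtype.val_injective).mono fun A hA => show _ ∧ _ from ⟨A.2, hsub A hA⟩
  have hT : T.Countable := by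
    rw [← image_preimage_inl_union_image_preimage_inr T]
    exact (hinl.image _).union (hC.image _)
  have : ℵ_ 1 ≤ ℵ₀ := hS ▸ le_aleph0_iff_set_countable.2 hT
  exact (aleph0_lt_aleph_one.trans_le this).false

/-- Assume `(ℵ_ω)^ω = ℵ_{ω+1}` and Chang's conjecture `(ℵ_{ω+1}, ℵ_ω) ↠ (ℵ_1, ℵ_0)`.
Then no point `x` of `2^{ℵ_ω}` has a local base `ℬ` in the `G_δ`-modification with
`|{B' ∈ ℬ : B ⊆ B'}| ≤ ℵ_0` for every `B ∈ ℬ`; i.e. `χNt(x, (2^{ℵ_ω})_δ) ≥ ω_2`. -/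
theorem stmt7
    (hpow : Cardinal.aleph Ordinal.omega0 ^ Cardinal.aleph0 =
      Cardinal.aleph (Ordinal.omega0 + 1))
    (hcc : ChangsConjecture)
    (ι : Type) (hι : Cardinal.mk ι = Cardinal.aleph Ordinal.omega0) (x : ι → Bool) :
    ¬ ∃ B : Set (Set (ι → Bool)),
        IsLocalBaseAt (deltaTop (ι → Bool)) x B ∧
        ∀ b ∈ B, {b' ∈ B | b ⊆ b'}.Countable := by
  have hpow₀ : (ℵ_ ω : Cardinal.{0}) ^ ℵ₀ = ℵ_ (ω + 1) :=
    Cardinal.lift_injective (by simpa using hpow)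
  rintro ⟨B, ⟨hBopen, hBbase⟩, hBcount⟩
  choose! supp hsuppc hsupp using fun b (hb : b ∈ B) =>
    exists_countable_pi_singleton_subset_of_isOpen_deltaTop (hBopen b hb).1 (hBopen b hb).2
  have hbase : ∀ s : Set ι, s.Countable → ∃ b ∈ B, b ⊆ s.pi fun i => {x i} := fun s hs =>
    hBbase _ (isGδ_pi_singleton hs x).isOpen_deltaTop fun _ _ => rfl
  have hFc : ∀ A ∈ supp '' B, A.Countable := forall_mem_image.2 hsuppc
  have hFcof : IsCofinalFor {s | s.Countable} (supp '' B) := fun s hs =>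
    have ⟨b, hb, hbs⟩ := hbase s hs
    ⟨supp b, mem_image_of_mem _ hb,
      (pi_singleton_subset_pi_singleton_iff x).1 ((hsupp b hb).trans hbs)⟩
  obtain ⟨C, hC, hFC⟩ := hcc.exists_countable_not_countable_subsets hι
    (mk_eq_aleph_omega0_add_one_of_isCofinalFor hpow₀ hι hFc hFcof) hFc
  obtain ⟨b₀, hb₀, hb₀C⟩ := hbase C hC
  refine hFC (((hBcount b₀ hb₀).image supp).mono ?_)
  rintro A ⟨⟨b, hb, rfl⟩, hAC⟩
  have hCb : (C.pi fun i => {x i}) ⊆ b :=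
    ((pi_singleton_subset_pi_singleton_iff x).2 hAC).trans (hsupp b hb)
  exact ⟨b, ⟨hb, hb₀C.trans hCb⟩, rfl⟩
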